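/- Let 𝔽 be an infinite field of characteristic p ≠ 2 and d ≥ 1. If tr(X₁⁻ X₂⁻ ⋯ X_d⁻) is decomposable in R₋^{O(n)} (i.e., lies in the 𝔽-span of products g·h with g, h ∈ R₋^{O(n)} homogeneous of positive degree), then tr((X₁ − X₁ᵀ)(X₂ − X₂ᵀ) ⋯ (X_d − X_dᵀ)) is decomposable in R^{O(n)} (i.e., lies in the 𝔽-span of products g·h with g, h ∈ R^{O(n)} homogeneous of positive degree). -/

import Mathlib

open Matrix
noncomputable section

/-- The polynomial ring `R = 𝔽[x_{ij}(k)]` in `n² d` variables. -/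
abbrev Rpoly (𝔽 : Type) [Field 𝔽] (n d : ℕ) : Type :=
  MvPolynomial (Fin n × Fin n × Fin d) 𝔽

/-- The generic matrix `X_k` with `(X_k)_{ij} = x_{ij}(k)`. -/
def Xgen (𝔽 : Type) [Field 𝔽] (n d : ℕ) (k : Fin d) :
    Matrix (Fin n) (Fin n) (Rpoly 𝔽 n d) :=
  fun i j => MvPolynomial.X (i, j, k)

/-- The symmetric generic matrix `X_k⁺`. -/
def XgenSym (𝔽 : Type) [Field 𝔽] (n d : ℕ) (k : Fin d) :
    Matrix (Fin n) (Fin n) (Rpoly 𝔽 n d) :=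
  fun i j => if j ≤ i then MvPolynomial.X (i, j, k) else MvPolynomial.X (j, i, k)

/-- The skew-symmetric generic matrix `X_k⁻`. -/
def XgenSkew (𝔽 : Type) [Field 𝔽] (n d : ℕ) (k : Fin d) :
    Matrix (Fin n) (Fin n) (Rpoly 𝔽 n d) :=
  fun i j =>
    if j < i then MvPolynomial.X (i, j, k)
    else if i < j then - MvPolynomial.X (j, i, k)
    else 0

/-- `σ_t(A)`, the `t`-th coefficient of the characteristic polynomial of `A`
(so `σ₁ = tr`, `σ_n = det`). -/
def sigmaCoeff {𝔽 : Type} [Field 𝔽] {n d : ℕ} (t : ℕ)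
    (A : Matrix (Fin n) (Fin n) (Rpoly 𝔽 n d)) : Rpoly 𝔽 n d :=
  (-1) ^ t * A.charpoly.coeff (n - t)

/-- The algebra `R^{O(n)}` of matrix `O(n)`-invariants: generated by all `σ_t(A)`,
`1 ≤ t ≤ n`, where `A` is a nonempty product of generic and transposed generic matrices. -/
def invO (𝔽 : Type) [Field 𝔽] (n d : ℕ) : Subalgebra 𝔽 (Rpoly 𝔽 n d) :=
  Algebra.adjoin 𝔽
    {f | ∃ t, 1 ≤ t ∧ t ≤ n ∧
      ∃ w : List (Matrix (Fin n) (Fin n) (Rpoly 𝔽 n d)), w ≠ [] ∧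
        (∀ m ∈ w, (∃ k, m = Xgen 𝔽 n d k) ∨ (∃ k, m = (Xgen 𝔽 n d k)ᵀ)) ∧
        f = sigmaCoeff t w.prod}

/-- The algebra `R₊^{O(n)}`, generated by all `σ_t(A)` for `A` a nonempty product of
symmetric generic matrices. -/
def invOplus (𝔽 : Type) [Field 𝔽] (n d : ℕ) : Subalgebra 𝔽 (Rpoly 𝔽 n d) :=
  Algebra.adjoin 𝔽
    {f | ∃ t, 1 ≤ t ∧ t ≤ n ∧
      ∃ w : List (Matrix (Fin n) (Fin n) (Rpoly 𝔽 n d)), w ≠ [] ∧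
        (∀ m ∈ w, ∃ k, m = XgenSym 𝔽 n d k) ∧
        f = sigmaCoeff t w.prod}

/-- The algebra `R₋^{O(n)}`, generated by all `σ_t(A)` for `A` a nonempty product of
skew-symmetric generic matrices. -/
def invOminus (𝔽 : Type) [Field 𝔽] (n d : ℕ) : Subalgebra 𝔽 (Rpoly 𝔽 n d) :=
  Algebra.adjoin 𝔽
    {f | ∃ t, 1 ≤ t ∧ t ≤ n ∧
      ∃ w : List (Matrix (Fin n) (Fin n) (Rpoly 𝔽 n d)), w ≠ [] ∧
        (∀ m ∈ w, ∃ k, m = XgenSkew 𝔽 n d k) ∧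
        f = sigmaCoeff t w.prod}

/-- `f` is decomposable in the subalgebra `A`: it lies in the `𝔽`-span of products `g·h`
with `g, h ∈ A` homogeneous of positive degree. -/
def Decomposable (𝔽 : Type) [Field 𝔽] {n d : ℕ} (A : Subalgebra 𝔽 (Rpoly 𝔽 n d))
    (f : Rpoly 𝔽 n d) : Prop :=
  f ∈ Submodule.span 𝔽
    {x : Rpoly 𝔽 n d | ∃ g ∈ A, ∃ h ∈ A,
      (∃ i, 0 < i ∧ MvPolynomial.IsHomogeneous g i) ∧
      (∃ j, 0 < j ∧ MvPolynomial.IsHomogeneous h j) ∧ x = g * h}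


/-!
The substitution `x_{ij}(k) ↦ x_{ij}(k) - x_{ji}(k)` is a degree-preserving algebra endomorphism
of `R` sending `X_k⁻` to `X_k - X_kᵀ`, so it carries decompositions in `R₋^{O(n)}` to
decompositions in `R^{O(n)}` as soon as it maps `R₋^{O(n)}` into `R^{O(n)}`. That amounts to
showing that every `σ_t` of a product of matrices `X_k - X_kᵀ` is an `O(n)`-invariant. Such a
product is a sum of signed words in the `X_k` and `X_kᵀ`, and an Amitsur-type argument shows that
the coefficients of `det (1 - u (A₁ + ⋯ + A_r))` lie in the ring generated by the coefficients of
the `det (1 - u w)`, `w` a product of the `A_i`. Working modulo a power of `u`, with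
`G = (1 - Y₁)⁻¹ = ∑ Y₁ ^ i` one has `1 - (Y₁ + Y₂) = (1 - Y₁) (1 - (Y₂ + G Y₁ Y₂))`, and the
correction term `G Y₁ Y₂` has higher order in `u`, so an induction on the order terminates.
-/

open Polynomial
open scoped Pointwise

theorem one_sub_add_eq_mul_of_pow_eq_zero {R : Type*} [Ring R] {A : R} {N : ℕ}
    (hA : A ^ N = 0) (B : R) :
    1 - (A + B) = (1 - A) * (1 - (B + (∑ i ∈ Finset.range N, A ^ i) * (A * B))) := by
  set G := ∑ i ∈ Finset.range N, A ^ i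
  have hG : (1 - A) * G = 1 := by rw [mul_neg_geom_sum, hA, sub_zero]
  calc 1 - (A + B) = (1 - A) - (1 - A) * B - 1 * (A * B) := by noncomm_ring
    _ = (1 - A) - (1 - A) * B - (1 - A) * G * (A * B) := by rw [hG]
    _ = _ := by noncomm_ring

section TruncatedDet

variable {m Q : Type*} [Fintype m] [CommRing Q]

/-- For nilpotent `u`, these are the matrices of `u`-order at least `c` built from `S`. -/
def powSmulClosure (S : Subsemigroup (Matrix m m Q)) (u : Q) (c : ℕ) :
    AddSubmonoid (Matrix m m Q) :=
  AddSubmonoid.closure {A | ∃ e, c ≤ e ∧ ∃ w ∈ S, A = u ^ e • w}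

variable {S : Subsemigroup (Matrix m m Q)} {u : Q}

theorem powSmulClosure_antitone : Antitone (powSmulClosure S u) :=
  fun _ _ hbc => AddSubmonoid.closure_mono fun _ ⟨e, he, w, hw, hA⟩ => ⟨e, hbc.trans he, w, hw, hA⟩

theorem mul_mem_powSmulClosure {b c : ℕ} {A B : Matrix m m Q}
    (hA : A ∈ powSmulClosure S u b) (hB : B ∈ powSmulClosure S u c) :
    A * B ∈ powSmulClosure S u (b + c) := by
  have hle : powSmulClosure S u b * powSmulClosure S u c ≤ powSmulClosure S u (b + c) := by
    rw [powSmulClosure, powSmulClosure, AddSubmonoid.closure_mul_closure]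
    refine AddSubmonoid.closure_mono ?_
    rintro _ ⟨_, ⟨e, he, v, hv, rfl⟩, _, ⟨f, hf, w, hw, rfl⟩, rfl⟩
    exact ⟨e + f, add_le_add he hf, v * w, S.mul_mem hv hw, (smul_mul_smul_comm _ _ _ _).trans
      (by rw [pow_add])⟩
  exact hle (AddSubmonoid.mul_mem_mul hA hB)

theorem eq_zero_of_mem_powSmulClosure {N c : ℕ} (hu : u ^ N = 0) (hc : N ≤ c)
    {A : Matrix m m Q} (hA : A ∈ powSmulClosure S u c) : A = 0 := by
  have hbot : powSmulClosure S u c ≤ ⊥ := by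
    refine AddSubmonoid.closure_le.2 ?_
    rintro _ ⟨e, he, w, -, rfl⟩
    simp [pow_eq_zero_of_le (hc.trans he) hu]
  exact (AddSubmonoid.mem_bot).1 (hbot hA)

variable [DecidableEq m]

theorem pow_succ_mem_powSmulClosure {c : ℕ} {A : Matrix m m Q}
    (hA : A ∈ powSmulClosure S u c) (k : ℕ) : A ^ (k + 1) ∈ powSmulClosure S u ((k + 1) * c) := by
  induction k with
  | zero => simpa using hA
  | succ k ih => simpa [pow_succ _ (k + 1), add_mul] using mul_mem_powSmulClosure ih hA

theorem isNilpotent_of_mem_powSmulClosure (hu : IsNilpotent u) {c : ℕ} (hc : 0 < c)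
    {A : Matrix m m Q} (hA : A ∈ powSmulClosure S u c) : IsNilpotent A := by
  obtain ⟨N, hN⟩ := hu
  exact ⟨N + 1, eq_zero_of_mem_powSmulClosure hN (Nat.le_mul_of_pos_right _ hc |>.trans' (by omega))
    (pow_succ_mem_powSmulClosure hA N)⟩

theorem geom_sum_mul_mul_mem_powSmulClosure {b c : ℕ} {A B : Matrix m m Q}
    (hA : A ∈ powSmulClosure S u c) (hB : B ∈ powSmulClosure S u b) (N : ℕ) :
    (∑ i ∈ Finset.range N, A ^ i) * (A * B) ∈ powSmulClosure S u (c + b) := by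
  rw [Finset.sum_mul]
  refine sum_mem fun i _ => ?_
  rw [← mul_assoc, ← pow_succ]
  exact powSmulClosure_antitone (by nlinarith)
    (mul_mem_powSmulClosure (pow_succ_mem_powSmulClosure hA i) hB)

theorem det_one_sub_add_mem {M : Submonoid Q} (hu : IsNilpotent u) {c : ℕ} (hc : 0 < c)
    {Y₁ Y₂ : Matrix m m Q} (hY₁ : Y₁ ∈ powSmulClosure S u c) (hY₂ : Y₂ ∈ powSmulClosure S u c)
    (h₁ : det (1 - Y₁) ∈ M) (h₂ : det (1 - Y₂) ∈ M)
    (hM : ∀ Z ∈ powSmulClosure S u (c + 1), det (1 - Z) ∈ M) :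
    det (1 - (Y₁ + Y₂)) ∈ M := by
  obtain ⟨N₁, hN₁⟩ := isNilpotent_of_mem_powSmulClosure hu hc hY₁
  obtain ⟨N₂, hN₂⟩ := isNilpotent_of_mem_powSmulClosure hu hc hY₂
  set Z := (∑ i ∈ Finset.range N₁, Y₁ ^ i) * (Y₁ * Y₂)
  have hZ : Z ∈ powSmulClosure S u (c + 1) :=
    powSmulClosure_antitone (by omega) (geom_sum_mul_mul_mem_powSmulClosure hY₁ hY₂ N₁)
  have hZ' : Z + (∑ i ∈ Finset.range N₂, Y₂ ^ i) * (Y₂ * Z) ∈ powSmulClosure S u (c + 1) :=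
    add_mem hZ (powSmulClosure_antitone (by omega)
      (geom_sum_mul_mul_mem_powSmulClosure hY₂ hZ N₂))
  rw [one_sub_add_eq_mul_of_pow_eq_zero hN₁, det_mul, one_sub_add_eq_mul_of_pow_eq_zero hN₂,
    det_mul]
  exact mul_mem h₁ (mul_mem h₂ (hM _ hZ'))

theorem det_one_sub_mem_closure (hu : IsNilpotent u) {c : ℕ} (hc : 0 < c) {Y : Matrix m m Q}
    (hY : Y ∈ powSmulClosure S u c) :
    det (1 - Y) ∈ Submonoid.closure {x | ∃ e, ∃ w ∈ S, x = det (1 - u ^ e • w)} := by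
  have ⟨N, hN⟩ := hu
  -- Induction on `N - c`: the add step only needs the claim in order `c + 1`.
  suffices ∀ k c, 0 < c → N ≤ c + k → ∀ Y ∈ powSmulClosure S u c,
      det (1 - Y) ∈ Submonoid.closure {x | ∃ e, ∃ w ∈ S, x = det (1 - u ^ e • w)} from
    this N c hc (by omega) Y hY
  intro k
  induction k with
  | zero =>
    intro c _ hNc Y hY
    rw [eq_zero_of_mem_powSmulClosure hN (by omega) hY, sub_zero, det_one]
    exact one_mem _
  | succ k ih =>
    intro c hc hNc Y hY
    induction hY using AddSubmonoid.closure_induction with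
    | mem Y hY =>
      obtain ⟨e, -, w, hw, rfl⟩ := hY
      exact Submonoid.subset_closure ⟨e, w, hw, rfl⟩
    | zero => simp [one_mem]
    | add Y₁ Y₂ hY₁ hY₂ h₁ h₂ =>
      exact det_one_sub_add_mem hu hc hY₁ hY₂ h₁ h₂ (ih (c + 1) (by omega) (by omega))

end TruncatedDet

section CharpolyRev

variable {m K R Q : Type*} [Fintype m] [DecidableEq m] [CommRing K] [CommRing R] [CommRing Q]

theorem map_charpolyRev (g : R[X] →+* Q) (A : Matrix m m R) :
    g A.charpolyRev = det (1 - g X • A.map (g.comp C)) := by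
  rw [Matrix.charpolyRev, RingHom.map_det]
  congr 1
  ext i j
  by_cases h : i = j <;> simp [h] <;> ring

theorem charpolyRev_neg (A : Matrix m m R) : (-A).charpolyRev = A.charpolyRev.comp (-X) := by
  rw [← coe_compRingHom_apply, map_charpolyRev, Matrix.charpolyRev]
  congr 1
  ext i j
  simp

theorem comp_mem_lifts (f : K →+* R) {p q : R[X]} (hp : p ∈ lifts f) (hq : q ∈ lifts f) :
    p.comp q ∈ lifts f := by
  obtain ⟨p', rfl⟩ := (mem_lifts p).1 hp
  obtain ⟨q', rfl⟩ := (mem_lifts q).1 hq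
  exact ⟨p'.comp q', Polynomial.map_comp ..⟩

theorem charpolyRev_mem_lifts_of_mem_closure (f : K →+* R) {S : Subsemigroup (Matrix m m R)}
    (hS : ∀ w ∈ S, w.charpolyRev ∈ lifts f) {A : Matrix m m R}
    (hA : A ∈ AddSubmonoid.closure (S : Set (Matrix m m R))) : A.charpolyRev ∈ lifts f := by
  rw [lifts_iff_coeff_lifts]
  intro j
  -- Coefficient `j` is seen in `R[X] ⧸ (X ^ (j + 1))`, where `X` is nilpotent.
  set π := Ideal.Quotient.mk (Ideal.span {(X : R[X]) ^ (j + 1)})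
  have hu : IsNilpotent (π X) :=
    ⟨j + 1, by rw [← map_pow, Ideal.Quotient.eq_zero_iff_mem]; exact Ideal.subset_span rfl⟩
  set ρ := (π.comp C).mapMatrix (m := m)
  set S' := S.map ρ.toMonoidHom.toMulHom
  have hY : π X • ρ A ∈ powSmulClosure S' (π X) 1 := by
    induction hA using AddSubmonoid.closure_induction with
    | mem w hw => exact AddSubmonoid.subset_closure ⟨1, le_rfl, ρ w, ⟨w, hw, rfl⟩, by rw [pow_one]⟩
    | zero => simp [zero_mem]
    | add A B _ _ hA hB => rw [map_add, smul_add]; exact add_mem hA hB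
  have hgen : Submonoid.closure {x | ∃ e, ∃ w ∈ S', x = det (1 - π X ^ e • w)} ≤
      (lifts f).toSubmonoid.map π := by
    refine Submonoid.closure_le.2 ?_
    rintro _ ⟨e, _, ⟨w, hw, rfl⟩, rfl⟩
    refine ⟨expand R e w.charpolyRev, comp_mem_lifts f (hS w hw) (X_pow_mem_lifts f e),
      (map_charpolyRev (π.comp (expand R e).toRingHom) w).trans ?_⟩
    simp [ρ, Function.comp_def]
  obtain ⟨b, hb, hπb⟩ := hgen (det_one_sub_mem_closure hu one_pos hY)
  change π b = det (1 - π X • A.map (π.comp C)) at hπb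
  rw [← map_charpolyRev π A] at hπb
  have hdvd : X ^ (j + 1) ∣ A.charpolyRev - b :=
    Ideal.mem_span_singleton.1 (Ideal.Quotient.eq.1 hπb.symm)
  have hcoeff := X_pow_dvd_iff.1 hdvd j j.lt_succ_self
  rw [coeff_sub, sub_eq_zero] at hcoeff
  exact hcoeff ▸ (lifts_iff_coeff_lifts b).1 hb j

end CharpolyRev

section Charpoly

variable {R : Type*} [CommRing R] [Nontrivial R] {n : ℕ} (A : Matrix (Fin n) (Fin n) R)

theorem coeff_charpolyRev_of_le {j : ℕ} (hj : j ≤ n) :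
    A.charpolyRev.coeff j = A.charpoly.coeff (n - j) := by
  rw [← Matrix.reverse_charpoly, coeff_reverse, Matrix.charpoly_natDegree_eq_dim,
    Fintype.card_fin, revAt_le hj]

theorem coeff_charpolyRev_of_lt {j : ℕ} (hj : n < j) : A.charpolyRev.coeff j = 0 := by
  rw [← Matrix.reverse_charpoly, coeff_reverse, Matrix.charpoly_natDegree_eq_dim,
    Fintype.card_fin, revAt_eq_self_of_lt hj]
  exact coeff_eq_zero_of_natDegree_lt (by rwa [Matrix.charpoly_natDegree_eq_dim, Fintype.card_fin])

end Charpoly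

theorem Decomposable.map {𝔽 : Type} [Field 𝔽] {n d : ℕ} {A B : Subalgebra 𝔽 (Rpoly 𝔽 n d)}
    {φ : Rpoly 𝔽 n d →ₐ[𝔽] Rpoly 𝔽 n d} (hAB : A.map φ ≤ B)
    (hφ : ∀ {g i}, MvPolynomial.IsHomogeneous g i → MvPolynomial.IsHomogeneous (φ g) i)
    {f : Rpoly 𝔽 n d} (hf : Decomposable 𝔽 A f) : Decomposable 𝔽 B (φ f) := by
  have hf' := Submodule.mem_map_of_mem (f := φ.toLinearMap) hf
  rw [Submodule.map_span] at hf'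
  refine Submodule.span_mono ?_ hf'
  rintro _ ⟨_, ⟨g, hg, h, hh, ⟨i, hi, hgi⟩, ⟨j, hj, hhj⟩, rfl⟩, rfl⟩
  exact ⟨φ g, hAB ⟨g, hg, rfl⟩, φ h, hAB ⟨h, hh, rfl⟩, ⟨i, hi, hφ hgi⟩, ⟨j, hj, hφ hhj⟩,
    map_mul φ g h⟩

section OrthogonalInvariants

variable (𝔽 : Type) [Field 𝔽] (n d : ℕ)

theorem sigmaCoeff_eq_coeff_charpolyRev {t : ℕ} (ht : t ≤ n)
    (A : Matrix (Fin n) (Fin n) (Rpoly 𝔽 n d)) :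
    sigmaCoeff t A = (-1) ^ t * A.charpolyRev.coeff t := by
  rw [sigmaCoeff, coeff_charpolyRev_of_le A ht]

theorem sigmaCoeff_map (φ : Rpoly 𝔽 n d →ₐ[𝔽] Rpoly 𝔽 n d) (t : ℕ)
    (A : Matrix (Fin n) (Fin n) (Rpoly 𝔽 n d)) :
    φ (sigmaCoeff t A) = sigmaCoeff t (A.map φ) := by
  have h := Matrix.charpoly_map A (φ : Rpoly 𝔽 n d →+* Rpoly 𝔽 n d)
  simp only [RingHom.coe_coe] at h
  simp [sigmaCoeff, h]

def skewSubst : Rpoly 𝔽 n d →ₐ[𝔽] Rpoly 𝔽 n d :=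
  MvPolynomial.aeval fun q => MvPolynomial.X q - MvPolynomial.X (q.2.1, q.1, q.2.2)

theorem map_XgenSkew_skewSubst (k : Fin d) :
    (XgenSkew 𝔽 n d k).map (skewSubst 𝔽 n d) = Xgen 𝔽 n d k - (Xgen 𝔽 n d k)ᵀ := by
  ext i j
  rcases lt_trichotomy i j with h | rfl | h
  · simp [XgenSkew, Xgen, skewSubst, h, h.not_gt]
  · simp [XgenSkew]
  · simp [XgenSkew, Xgen, skewSubst, h]

theorem isHomogeneous_skewSubst {g : Rpoly 𝔽 n d} {i : ℕ} (hg : g.IsHomogeneous i) :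
    (skewSubst 𝔽 n d g).IsHomogeneous i := by
  have h := hg.aeval (n := 1)
    (fun q => (MvPolynomial.X q : Rpoly 𝔽 n d) - MvPolynomial.X (q.2.1, q.1, q.2.2))
    fun _ => (MvPolynomial.isHomogeneous_X _ _).sub (MvPolynomial.isHomogeneous_X _ _)
  rwa [one_mul] at h

def signedWords : Subsemigroup (Matrix (Fin n) (Fin n) (Rpoly 𝔽 n d)) where
  carrier := {M | ∃ w : List (Matrix (Fin n) (Fin n) (Rpoly 𝔽 n d)), w ≠ [] ∧
    (∀ m ∈ w, (∃ k, m = Xgen 𝔽 n d k) ∨ (∃ k, m = (Xgen 𝔽 n d k)ᵀ)) ∧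
    (M = w.prod ∨ M = -w.prod)}
  mul_mem' := by
    rintro _ _ ⟨v, hv, hvX, hvs⟩ ⟨w, -, hwX, hws⟩
    refine ⟨v ++ w, by simp [hv], fun m hm => (List.mem_append.1 hm).elim (hvX m) (hwX m), ?_⟩
    rcases hvs with rfl | rfl <;> rcases hws with rfl | rfl <;> simp

theorem charpolyRev_prod_mem_lifts (w : List (Matrix (Fin n) (Fin n) (Rpoly 𝔽 n d)))
    (hw : w ≠ []) (hwX : ∀ m ∈ w, (∃ k, m = Xgen 𝔽 n d k) ∨ (∃ k, m = (Xgen 𝔽 n d k)ᵀ)) :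
    w.prod.charpolyRev ∈ lifts (invO 𝔽 n d).toSubring.subtype := by
  rw [lifts_iff_coeff_lifts]
  intro j
  suffices w.prod.charpolyRev.coeff j ∈ invO 𝔽 n d from ⟨⟨_, this⟩, rfl⟩
  rcases j.eq_zero_or_pos with rfl | hj0
  · rw [coeff_zero_eq_eval_zero, Matrix.eval_charpolyRev]
    exact one_mem _
  rcases le_or_gt j n with hjn | hjn
  · have hσ : sigmaCoeff j w.prod ∈ invO 𝔽 n d :=
      Algebra.subset_adjoin ⟨j, hj0, hjn, w, hw, hwX, rfl⟩
    have hcoeff : w.prod.charpolyRev.coeff j = (-1) ^ j * sigmaCoeff j w.prod := by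
      rw [sigmaCoeff_eq_coeff_charpolyRev 𝔽 n d hjn, ← mul_assoc, ← mul_pow]
      simp
    rw [hcoeff]
    exact mul_mem (pow_mem (neg_mem (one_mem _)) j) hσ
  · rw [coeff_charpolyRev_of_lt _ hjn]
    exact zero_mem _

theorem charpolyRev_mem_lifts_of_mem_signedWords {M : Matrix (Fin n) (Fin n) (Rpoly 𝔽 n d)}
    (hM : M ∈ signedWords 𝔽 n d) : M.charpolyRev ∈ lifts (invO 𝔽 n d).toSubring.subtype := by
  obtain ⟨w, hw, hwX, rfl | rfl⟩ := hM
  · exact charpolyRev_prod_mem_lifts 𝔽 n d w hw hwX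
  · rw [charpolyRev_neg]
    exact comp_mem_lifts _ (charpolyRev_prod_mem_lifts 𝔽 n d w hw hwX) ⟨-X, by simp⟩

theorem sub_transpose_mem_closure_signedWords (k : Fin d) :
    Xgen 𝔽 n d k - (Xgen 𝔽 n d k)ᵀ ∈ AddSubmonoid.closure (signedWords 𝔽 n d : Set _) := by
  rw [sub_eq_add_neg]
  exact add_mem (AddSubmonoid.subset_closure ⟨[Xgen 𝔽 n d k], by simp, by simp, Or.inl (by simp)⟩)
    (AddSubmonoid.subset_closure ⟨[(Xgen 𝔽 n d k)ᵀ], by simp, by simp, Or.inr (by simp)⟩)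

theorem map_invOminus_skewSubst_le : (invOminus 𝔽 n d).map (skewSubst 𝔽 n d) ≤ invO 𝔽 n d := by
  rw [invOminus, AlgHom.map_adjoin, Algebra.adjoin_le_iff]
  rintro _ ⟨_, ⟨t, ht1, htn, w, hw, hwX, rfl⟩, rfl⟩
  have hW : (w.prod).map (skewSubst 𝔽 n d) ∈ AddSubmonoid.closure (signedWords 𝔽 n d : Set _) := by
    rw [← AlgHom.mapMatrix_apply, map_list_prod]
    refine List.prod_induction_nonempty _ (fun _ _ => MulMemClass.mul_mem_add_closure)
      (by simpa using hw) ?_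
    intro _ hm
    obtain ⟨M, hM, rfl⟩ := List.mem_map.1 hm
    obtain ⟨k, rfl⟩ := hwX M hM
    rw [AlgHom.mapMatrix_apply, map_XgenSkew_skewSubst]
    exact sub_transpose_mem_closure_signedWords 𝔽 n d k
  obtain ⟨⟨c, hc⟩, hc'⟩ := (lifts_iff_coeff_lifts _).1 (charpolyRev_mem_lifts_of_mem_closure _
    (fun _ => charpolyRev_mem_lifts_of_mem_signedWords 𝔽 n d) hW) t
  rw [SetLike.mem_coe, sigmaCoeff_map, sigmaCoeff_eq_coeff_charpolyRev 𝔽 n d htn, ← hc']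
  exact mul_mem (pow_mem (neg_mem (one_mem _)) t) hc

end OrthogonalInvariants

theorem decomposable_skew_imp_decomposable_diff_general
    (𝔽 : Type) [Field 𝔽] (n d : ℕ)
    (hdec : Decomposable 𝔽 (invOminus 𝔽 n d)
      (Matrix.trace (List.ofFn (fun k : Fin d => XgenSkew 𝔽 n d k)).prod)) :
    Decomposable 𝔽 (invO 𝔽 n d)
      (Matrix.trace (List.ofFn (fun k : Fin d =>
        Xgen 𝔽 n d k - (Xgen 𝔽 n d k)ᵀ)).prod) := by
  have himage : skewSubst 𝔽 n d (List.ofFn fun k : Fin d => XgenSkew 𝔽 n d k).prod.trace =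
      (List.ofFn fun k : Fin d => Xgen 𝔽 n d k - (Xgen 𝔽 n d k)ᵀ).prod.trace := by
    rw [AddMonoidHom.map_trace, ← AlgHom.mapMatrix_apply, map_list_prod, List.map_ofFn]
    simp only [Function.comp_def, AlgHom.mapMatrix_apply, map_XgenSkew_skewSubst]
  rw [← himage]
  exact hdec.map (map_invOminus_skewSubst_le 𝔽 n d) (isHomogeneous_skewSubst 𝔽 n d)

theorem decomposable_skew_imp_decomposable_diff
    (𝔽 : Type) [Field 𝔽] [Infinite 𝔽] (n d : ℕ) (hn : 2 ≤ n) (hd : 1 ≤ d)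
    (hp2 : ringChar 𝔽 ≠ 2)
    (hdec : Decomposable 𝔽 (invOminus 𝔽 n d)
      (Matrix.trace (List.ofFn (fun k : Fin d => XgenSkew 𝔽 n d k)).prod)) :
    Decomposable 𝔽 (invO 𝔽 n d)
      (Matrix.trace (List.ofFn (fun k : Fin d =>
        Xgen 𝔽 n d k - (Xgen 𝔽 n d k)ᵀ)).prod) :=
  decomposable_skew_imp_decomposable_diff_general 𝔽 n d hdec

end
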